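/- Let Y be a nonempty compact subset of ℂ² such that the uniform algebra P(Y) has dense invertibles. Then for every point z in the polynomial hull Ŷ and every polynomial function p in the two complex coordinates with p(z) = 0, there exists y ∈ Y with p(y) = 0. (That is, the polynomial hull of Y coincides with its rational hull.) -/

import Mathlib

open BoundedContinuousFunction Set

noncomputable def pev (q : MvPolynomial (Fin 2) ℂ) (z : ℂ × ℂ) : ℂ :=
  MvPolynomial.eval ![z.1, z.2] q

def bidisk : Set (ℂ × ℂ) := {z : ℂ × ℂ | ‖z.1‖ ≤ 1 ∧ ‖z.2‖ ≤ 1}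

def polyHull (Y : Set (ℂ × ℂ)) : Set (ℂ × ℂ) :=
  {z : ℂ × ℂ | ∀ (q : MvPolynomial (Fin 2) ℂ) (M : ℝ),
    (∀ y ∈ Y, ‖pev q y‖ ≤ M) → ‖pev q z‖ ≤ M}

/-- The subalgebra of `Y →ᵇ ℂ` consisting of restrictions to `Y` of polynomial
functions in the two complex coordinates. -/
noncomputable def polySub (Y : Set (ℂ × ℂ)) : Subalgebra ℂ (Y →ᵇ ℂ) where
  carrier := {f : Y →ᵇ ℂ | ∃ q : MvPolynomial (Fin 2) ℂ, ∀ y : Y, f y = pev q ↑y}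
  mul_mem' := by
    rintro f g ⟨q, hq⟩ ⟨r, hr⟩
    exact ⟨q * r, fun y => by simp [pev, hq y, hr y]⟩
  one_mem' := ⟨1, fun y => by simp [pev]⟩
  add_mem' := by
    rintro f g ⟨q, hq⟩ ⟨r, hr⟩
    exact ⟨q + r, fun y => by simp [pev, hq y, hr y]⟩
  zero_mem' := ⟨0, fun y => by simp [pev]⟩
  algebraMap_mem' := fun c => ⟨MvPolynomial.C c, fun y => by simp [pev]⟩

/-- `P(Y)`: the uniform closure of the polynomial restrictions, as a Banach algebra
(a closed subalgebra of the bounded continuous functions on `Y`). -/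
noncomputable def PY (Y : Set (ℂ × ℂ)) : Subalgebra ℂ (Y →ᵇ ℂ) :=
  (polySub Y).topologicalClosure

/-!
If `q` had no zero on `Y`, its restriction `f` to `Y` would be invertible in the bounded continuous
functions. Approximating `f` by units `gₙ` of `P(Y)`, continuity of inversion gives `gₙ⁻¹ → f⁻¹`,
so `f⁻¹` lies in the closed algebra `P(Y)`. Approximating `f⁻¹` by a polynomial `r` then gives
`‖1 - r q‖ < 1` on `Y`, whereas `(1 - r q)(z) = 1`, contradicting `z ∈ Ŷ`.
-/

theorem Subalgebra.isUnit_of_isUnit_coe_of_dense {𝕜 R : Type*} [CommRing 𝕜] [NormedRing R]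
    [HasSummableGeomSeries R] [Algebra 𝕜 R] {S : Subalgebra 𝕜 R} (hS : IsClosed (S : Set R))
    (hdense : Dense {a : S | IsUnit a}) {x : S} (hx : IsUnit (x : R)) : IsUnit x := by
  have hinv_mem : Ring.inverse (x : R) ∈ S := by
    have hcont : ContinuousAt (fun a : S => Ring.inverse (a : R)) x :=
      (hx.unit_spec ▸ NormedRing.inverse_continuousAt hx.unit).comp
        continuous_subtype_val.continuousAt
    have himage : (fun a : S => Ring.inverse (a : R)) '' {a : S | IsUnit a} ⊆ S := by
      rintro _ ⟨_, ⟨u, rfl⟩, rfl⟩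
      simpa using Ring.inverse_unit (Units.map (S.val : S →* R) u) ▸ (↑u⁻¹ : S).2
    exact hS.closure_subset_iff.mpr himage (mem_closure_image hcont (hdense x))
  exact ⟨⟨x, ⟨_, hinv_mem⟩, Subtype.ext (Ring.mul_inverse_cancel _ hx),
    Subtype.ext (Ring.inverse_mul_cancel _ hx)⟩, rfl⟩

theorem exists_mem_norm_one_sub_mul_lt_one {R : Type*} [SeminormedRing R] {S : Set R} {f h : R}
    (hh : h ∈ closure S) (hhf : h * f = 1) : ∃ b ∈ S, ‖1 - b * f‖ < 1 := by
  have hopen : IsOpen {b : R | ‖1 - b * f‖ < 1} :=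
    isOpen_lt (by fun_prop) continuous_const
  obtain ⟨b, hb, hbS⟩ := mem_closure_iff.mp hh _ hopen (by simp [hhf])
  exact ⟨b, hbS, hb⟩

theorem BoundedContinuousFunction.isUnit_of_forall_ne_zero {α 𝕜 : Type*} [TopologicalSpace α]
    [CompactSpace α] [NormedField 𝕜] {f : α →ᵇ 𝕜} (hf : ∀ x, f x ≠ 0) : IsUnit f :=
  IsUnit.of_mul_eq_one (mkOfCompact ⟨fun x => (f x)⁻¹, f.continuous.inv₀ hf⟩) <| by
    ext x
    simp [hf x]

theorem continuous_pev (q : MvPolynomial (Fin 2) ℂ) : Continuous (pev q) :=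
  (MvPolynomial.continuous_eval q).comp (by fun_prop)

noncomputable def polyRestrict (Y : Set (ℂ × ℂ)) [CompactSpace Y] (q : MvPolynomial (Fin 2) ℂ) :
    Y →ᵇ ℂ :=
  mkOfCompact ⟨fun y => pev q y, (continuous_pev q).comp continuous_subtype_val⟩

@[simp]
theorem polyRestrict_apply {Y : Set (ℂ × ℂ)} [CompactSpace Y] (q : MvPolynomial (Fin 2) ℂ)
    (y : Y) : polyRestrict Y q y = pev q y :=
  rfl

theorem polyRestrict_mem_PY {Y : Set (ℂ × ℂ)} [CompactSpace Y] (q : MvPolynomial (Fin 2) ℂ) :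
    polyRestrict Y q ∈ PY Y :=
  (polySub Y).le_topologicalClosure ⟨q, fun _ => rfl⟩

theorem norm_pev_le_of_mem_polyHull {Y : Set (ℂ × ℂ)} {z : ℂ × ℂ} (hz : z ∈ polyHull Y)
    {q : MvPolynomial (Fin 2) ℂ} {f : Y →ᵇ ℂ} (hf : ∀ y : Y, f y = pev q y) :
    ‖pev q z‖ ≤ ‖f‖ :=
  hz q ‖f‖ fun y hy => hf ⟨y, hy⟩ ▸ f.norm_coe_le_norm _

theorem stmt9_general (Y : Set (ℂ × ℂ)) (hcpt : IsCompact Y)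
    (hinv : Dense {f : PY Y | IsUnit f}) :
    ∀ z ∈ polyHull Y, ∀ q : MvPolynomial (Fin 2) ℂ,
      pev q z = 0 → ∃ y ∈ Y, pev q y = 0 := by
  intro z hz q hqz
  by_contra! hq
  have : CompactSpace Y := isCompact_iff_compactSpace.mp hcpt
  let f : PY Y := ⟨polyRestrict Y q, polyRestrict_mem_PY q⟩
  have hf : IsUnit f :=
    Subalgebra.isUnit_of_isUnit_coe_of_dense (Subalgebra.isClosed_topologicalClosure _) hinv
      (isUnit_of_forall_ne_zero fun y => hq y y.2)
  obtain ⟨g, ⟨r, hr⟩, hg⟩ :=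
    exists_mem_norm_one_sub_mul_lt_one (↑hf.unit⁻¹ : PY Y).2 (congrArg Subtype.val hf.unit.inv_mul)
  have hle := norm_pev_le_of_mem_polyHull hz (q := 1 - r * q) (f := 1 - g * polyRestrict Y q)
    fun y => by simp [pev, hr y]
  have hz_one : pev (1 - r * q) z = 1 := by
    simp only [pev, map_sub, map_mul, map_one] at hqz ⊢
    rw [hqz, mul_zero, sub_zero]
  rw [hz_one, norm_one] at hle
  exact (hle.trans_lt hg).false

/-- Let `Y` be a nonempty compact subset of `ℂ²` such that `P(Y)` has dense invertibles.
Then for every point `z` of the polynomial hull of `Y` and every polynomial `p` with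
`p z = 0`, there exists `y ∈ Y` with `p y = 0`. -/
theorem stmt9 (Y : Set (ℂ × ℂ)) (hne : Y.Nonempty) (hcpt : IsCompact Y)
    (hinv : Dense {f : PY Y | IsUnit f}) :
    ∀ z ∈ polyHull Y, ∀ q : MvPolynomial (Fin 2) ℂ,
      pev q z = 0 → ∃ y ∈ Y, pev q y = 0 :=
  stmt9_general Y hcpt hinv
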